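/- Sequential adjustment is coherent: let B, X, Y be random vectors and let (X,Y) denote the stacked random vector whose components are those of X followed by those of Y. Let W be the Moore–Penrose inverse of Var((X,Y)) and let W' be the Moore–Penrose inverse of the adjusted variance Var_X(Y). Then, almost surely (componentwise), E_{(X,Y)}(B) = E_X(B) + Cov_X(B,Y)·W'·(Y − E_X(Y)); that is, adjusting B by X and then by the residual information in Y gives the same result as adjusting B by X and Y simultaneously. -/

import Mathlib

open MeasureTheory Matrix

variable {Ω : Type*}

/-- The covariance matrix of two random vectors `B` (dimension `m`) and `D` (dimension `n`):
the `(i,j)` entry is `E[Bᵢ·Dⱼ] − E[Bᵢ]·E[Dⱼ]`. -/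
noncomputable def cov [MeasurableSpace Ω] (μ : Measure Ω) {m n : ℕ}
    (B : Fin m → Ω → ℝ) (D : Fin n → Ω → ℝ) : Matrix (Fin m) (Fin n) ℝ :=
  Matrix.of fun i j =>
    (∫ ω, B i ω * D j ω ∂μ) - (∫ ω, B i ω ∂μ) * (∫ ω, D j ω ∂μ)

/-- `W` is a Moore–Penrose inverse of `V`. -/
def IsMoorePenrose {m n : ℕ} (V : Matrix (Fin m) (Fin n) ℝ)
    (W : Matrix (Fin n) (Fin m) ℝ) : Prop :=
  V * W * V = V ∧ W * V * W = W ∧ (V * W)ᵀ = V * W ∧ (W * V)ᵀ = W * V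

/-- The adjusted expectation `E_D(B)` (computed with the matrix `W`, intended to be the
Moore–Penrose inverse of `Var(D)`): the `i`-th component is
`E[Bᵢ] + Σ_j (Cov(B,D)·W)_{ij}·(Dⱼ − E[Dⱼ])`. -/
noncomputable def adjExp [MeasurableSpace Ω] (μ : Measure Ω) {m n : ℕ}
    (B : Fin m → Ω → ℝ) (D : Fin n → Ω → ℝ)
    (W : Matrix (Fin n) (Fin n) ℝ) : Fin m → Ω → ℝ :=
  fun i ω => (∫ ω', B i ω' ∂μ) + ∑ j, (cov μ B D * W) i j * (D j ω - ∫ ω', D j ω' ∂μ)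

/-- The adjusted covariance `Cov_D(B,C) = Cov(B − E_D(B), C − E_D(C))`. -/
noncomputable def adjCov [MeasurableSpace Ω] (μ : Measure Ω) {m p n : ℕ}
    (B : Fin m → Ω → ℝ) (C : Fin p → Ω → ℝ) (D : Fin n → Ω → ℝ)
    (W : Matrix (Fin n) (Fin n) ℝ) : Matrix (Fin m) (Fin p) ℝ :=
  cov μ (fun i ω => B i ω - adjExp μ B D W i ω) (fun j ω => C j ω - adjExp μ C D W j ω)


/-!
Covariance is bilinear on `L²`, and a combination `A (D - E D)` whose rows lie in the left kernel
of `Var(D)` has variance zero, hence vanishes almost surely. Consequently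
`Cov(B,D) W Var(D) = Cov(B,D)` whenever `Var(D) W Var(D) = Var(D)`, and `E_D(B) = E[B] + A (D - E D)`
almost surely for every solution `A` of the normal equations `A Var(D) = Cov(B,D)`.

For `Z = (X,Y)` take `A = [P - S Q, S]` with `P = Cov(B,X) W_X`, `Q = Cov(Y,X) W_X` and
`S = Cov_X(B,Y) W'`, so that `A (Z - E Z)` is exactly the two-step adjustment. The normal equations
for `A` say that `(B - E_X B) - S (Y - E_X Y)` is uncorrelated with `Z`: with `X` because residuals
of an adjustment by `X` are, and with `Y` because against a vector uncorrelated with `X` one may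
replace `Y` by its residual `Y - E_X Y`, where the condition becomes
`Cov_X(B,Y) W' Var_X(Y) = Cov_X(B,Y)`.
-/

open ProbabilityTheory

noncomputable section

def linComb {m n : ℕ} (A : Matrix (Fin m) (Fin n) ℝ) (D : Fin n → Ω → ℝ) (i : Fin m) (ω : Ω) :
    ℝ :=
  (A *ᵥ fun k => D k ω) i

def centered [MeasurableSpace Ω] (μ : Measure Ω) {n : ℕ} (D : Fin n → Ω → ℝ) (k : Fin n)
    (ω : Ω) : ℝ :=
  D k ω - ∫ ω', D k ω' ∂μ

def adjResidual [MeasurableSpace Ω] (μ : Measure Ω) {m n : ℕ} (B : Fin m → Ω → ℝ)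
    (D : Fin n → Ω → ℝ) (W : Matrix (Fin n) (Fin n) ℝ) (i : Fin m) (ω : Ω) : ℝ :=
  B i ω - adjExp μ B D W i ω

end

section LinComb

variable {m n p : ℕ}

lemma linComb_sub (A : Matrix (Fin m) (Fin n) ℝ) (D E : Fin n → Ω → ℝ) :
    linComb A (D - E) = linComb A D - linComb A E := by
  funext i ω
  simp [linComb, Matrix.mulVec, dotProduct, mul_sub]

lemma sub_linComb (A A' : Matrix (Fin m) (Fin n) ℝ) (D : Fin n → Ω → ℝ) :
    linComb (A - A') D = linComb A D - linComb A' D := by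
  funext i ω
  simp [linComb, Matrix.sub_mulVec]

lemma linComb_linComb (A : Matrix (Fin m) (Fin n) ℝ) (A' : Matrix (Fin n) (Fin p) ℝ)
    (D : Fin p → Ω → ℝ) : linComb A (linComb A' D) = linComb (A * A') D := by
  funext i ω
  simp [linComb, Matrix.mulVec_mulVec]

lemma linComb_append (M : Matrix (Fin m) (Fin n) ℝ) (N : Matrix (Fin m) (Fin p) ℝ)
    (D : Fin n → Ω → ℝ) (E : Fin p → Ω → ℝ) :
    linComb (Matrix.of fun i => Fin.append (M i) (N i)) (Fin.append D E) =
      linComb M D + linComb N E := by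
  funext i ω
  simp [linComb, Matrix.mulVec, dotProduct, Fin.sum_univ_add]

lemma linComb_append_sub_mul (P : Matrix (Fin m) (Fin n) ℝ) (S : Matrix (Fin m) (Fin p) ℝ)
    (Q : Matrix (Fin p) (Fin n) ℝ) (D : Fin n → Ω → ℝ) (E : Fin p → Ω → ℝ) :
    linComb (Matrix.of fun i => Fin.append ((P - S * Q) i) (S i)) (Fin.append D E) =
      linComb P D + linComb S (E - linComb Q D) := by
  rw [linComb_append, sub_linComb, linComb_sub, linComb_linComb]
  abel

end LinComb

section Covariance

variable [MeasurableSpace Ω] {μ : Measure Ω} {m n p : ℕ}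

lemma cov_transpose (B : Fin m → Ω → ℝ) (D : Fin n → Ω → ℝ) : (cov μ B D)ᵀ = cov μ D B := by
  ext i j
  simp only [cov, Matrix.transpose_apply, Matrix.of_apply, mul_comm (B j _), mul_comm (∫ ω, B j ω ∂μ)]

lemma cov_append_right_eq_zero {F : Fin m → Ω → ℝ} {X : Fin n → Ω → ℝ} {Y : Fin p → Ω → ℝ}
    (hX : cov μ F X = 0) (hY : cov μ F Y = 0) : cov μ F (Fin.append X Y) = 0 := by
  ext i k
  refine Fin.addCases (fun k => ?_) (fun k => ?_) k
  · simpa [cov] using congrFun (congrFun hX i) k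
  · simpa [cov] using congrFun (congrFun hY i) k

lemma memLp_sub {D E : Fin n → Ω → ℝ} (hD : ∀ k, MemLp (D k) 2 μ)
    (hE : ∀ k, MemLp (E k) 2 μ) (k : Fin n) : MemLp ((D - E) k) 2 μ :=
  (hD k).sub (hE k)

lemma memLp_append {X : Fin n → Ω → ℝ} {Y : Fin p → Ω → ℝ} (hX : ∀ k, MemLp (X k) 2 μ)
    (hY : ∀ k, MemLp (Y k) 2 μ) (k : Fin (n + p)) : MemLp (Fin.append X Y k) 2 μ := by
  refine Fin.addCases (fun k => ?_) (fun k => ?_) k <;> simp [hX, hY]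

lemma memLp_linComb (A : Matrix (Fin m) (Fin n) ℝ) {D : Fin n → Ω → ℝ}
    (hD : ∀ k, MemLp (D k) 2 μ) (i : Fin m) : MemLp (linComb A D i) 2 μ :=
  memLp_finsetSum Finset.univ fun k _ => (hD k).const_mul (A i k)

variable [IsProbabilityMeasure μ]

lemma memLp_centered {D : Fin n → Ω → ℝ} (hD : ∀ k, MemLp (D k) 2 μ) (k : Fin n) :
    MemLp (centered μ D k) 2 μ :=
  (hD k).sub (memLp_const _)

lemma cov_apply_eq_covariance {B : Fin m → Ω → ℝ} {D : Fin n → Ω → ℝ}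
    (hB : ∀ i, MemLp (B i) 2 μ) (hD : ∀ j, MemLp (D j) 2 μ) (i : Fin m) (j : Fin n) :
    cov μ B D i j = cov[B i, D j; μ] :=
  (covariance_eq_sub (hB i) (hD j)).symm

lemma cov_sub_left {B B' : Fin m → Ω → ℝ} {D : Fin n → Ω → ℝ} (hB : ∀ i, MemLp (B i) 2 μ)
    (hB' : ∀ i, MemLp (B' i) 2 μ) (hD : ∀ j, MemLp (D j) 2 μ) :
    cov μ (B - B') D = cov μ B D - cov μ B' D := by
  ext i j
  rw [Matrix.sub_apply, cov_apply_eq_covariance (memLp_sub hB hB') hD,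
    cov_apply_eq_covariance hB hD, cov_apply_eq_covariance hB' hD]
  exact covariance_sub_left (hB i) (hB' i) (hD j)

lemma cov_centered_left {B : Fin m → Ω → ℝ} {D : Fin n → Ω → ℝ} (hB : ∀ i, MemLp (B i) 2 μ)
    (hD : ∀ j, MemLp (D j) 2 μ) : cov μ (centered μ B) D = cov μ B D := by
  ext i j
  rw [cov_apply_eq_covariance (memLp_centered hB) hD, cov_apply_eq_covariance hB hD]
  exact covariance_sub_const_left ((hB i).integrable one_le_two) _

lemma cov_linComb_left (A : Matrix (Fin m) (Fin n) ℝ) {B : Fin n → Ω → ℝ}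
    {D : Fin p → Ω → ℝ} (hB : ∀ i, MemLp (B i) 2 μ) (hD : ∀ j, MemLp (D j) 2 μ) :
    cov μ (linComb A B) D = A * cov μ B D := by
  ext i j
  rw [cov_apply_eq_covariance (memLp_linComb A hB) hD, Matrix.mul_apply]
  change cov[fun ω => ∑ k, A i k * B k ω, D j; μ] = _
  rw [covariance_fun_sum_left (fun k => (hB k).const_mul (A i k)) (hD j)]
  simp only [covariance_const_mul_left, cov_apply_eq_covariance hB hD]

lemma cov_sub_right {B : Fin m → Ω → ℝ} {D D' : Fin n → Ω → ℝ} (hB : ∀ i, MemLp (B i) 2 μ)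
    (hD : ∀ j, MemLp (D j) 2 μ) (hD' : ∀ j, MemLp (D' j) 2 μ) :
    cov μ B (D - D') = cov μ B D - cov μ B D' := by
  rw [← cov_transpose, cov_sub_left hD hD' hB, Matrix.transpose_sub, cov_transpose,
    cov_transpose]

lemma cov_centered_right {B : Fin m → Ω → ℝ} {D : Fin n → Ω → ℝ} (hB : ∀ i, MemLp (B i) 2 μ)
    (hD : ∀ j, MemLp (D j) 2 μ) : cov μ B (centered μ D) = cov μ B D := by
  rw [← cov_transpose, cov_centered_left hD hB, cov_transpose]

lemma cov_linComb_right (A : Matrix (Fin p) (Fin n) ℝ) {B : Fin m → Ω → ℝ}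
    {D : Fin n → Ω → ℝ} (hB : ∀ i, MemLp (B i) 2 μ) (hD : ∀ j, MemLp (D j) 2 μ) :
    cov μ B (linComb A D) = cov μ B D * Aᵀ := by
  rw [← cov_transpose, cov_linComb_left A hD hB, Matrix.transpose_mul, cov_transpose]

end Covariance

section Degenerate

variable [MeasurableSpace Ω] {μ : Measure Ω} {m n p : ℕ}

lemma covariance_congr_right {X Y Y' : Ω → ℝ} (h : Y =ᵐ[μ] Y') :
    cov[X, Y; μ] = cov[X, Y'; μ] := by
  unfold covariance
  rw [integral_congr_ae h]
  refine integral_congr_ae ?_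
  filter_upwards [h] with ω hω
  rw [hω]

variable [IsProbabilityMeasure μ]

lemma integral_linComb_centered (A : Matrix (Fin m) (Fin n) ℝ) {D : Fin n → Ω → ℝ}
    (hD : ∀ k, MemLp (D k) 2 μ) (i : Fin m) :
    ∫ ω, linComb A (centered μ D) i ω ∂μ = 0 := by
  change ∫ ω, ∑ k, A i k * centered μ D k ω ∂μ = 0
  rw [integral_finsetSum _ fun k _ => ((memLp_centered hD k).integrable one_le_two).const_mul _]
  refine Finset.sum_eq_zero fun k _ => ?_
  rw [integral_const_mul]
  change A i k * ∫ ω, D k ω - ∫ ω', D k ω' ∂μ ∂μ = 0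
  rw [integral_sub ((hD k).integrable one_le_two) (integrable_const _)]
  simp

lemma ae_linComb_centered_eq_zero {A : Matrix (Fin m) (Fin n) ℝ} {D : Fin n → Ω → ℝ}
    (hD : ∀ k, MemLp (D k) 2 μ) (hA : A * cov μ D D = 0) (i : Fin m) :
    ∀ᵐ ω ∂μ, linComb A (centered μ D) i ω = 0 := by
  have hc := memLp_centered hD
  have hAc := memLp_linComb A hc
  have hvar : Var[linComb A (centered μ D) i; μ] = 0 := by
    rw [← covariance_self (hAc i).aemeasurable, ← cov_apply_eq_covariance hAc hAc,
      cov_linComb_left A hc hAc, cov_linComb_right A hc hc, cov_centered_left hD hc,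
      cov_centered_right hD hD, ← Matrix.mul_assoc, hA, Matrix.zero_mul, Matrix.zero_apply]
  filter_upwards [ae_eq_integral_of_variance_eq_zero (hAc i) hvar] with ω hω
  rw [hω, integral_linComb_centered A hD i]

lemma cov_mul_eq_zero_of_cov_self_mul_eq_zero {B : Fin m → Ω → ℝ} {D : Fin n → Ω → ℝ}
    (hB : ∀ i, MemLp (B i) 2 μ) (hD : ∀ k, MemLp (D k) 2 μ) {N : Matrix (Fin n) (Fin p) ℝ}
    (hN : cov μ D D * N = 0) : cov μ B D * N = 0 := by
  have hNt : Nᵀ * cov μ D D = 0 := by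
    rw [← cov_transpose D D, ← Matrix.transpose_mul, hN, Matrix.transpose_zero]
  have hc := memLp_centered hD
  calc cov μ B D * N = cov μ B (linComb Nᵀ (centered μ D)) := by
        rw [cov_linComb_right _ hB hc, cov_centered_right hB hD, Matrix.transpose_transpose]
    _ = 0 := by
        ext i j
        rw [cov_apply_eq_covariance hB (memLp_linComb _ hc),
          covariance_congr_right (ae_linComb_centered_eq_zero hD hNt j)]
        exact covariance_const_right 0

lemma cov_mul_mul_cov_self {B : Fin m → Ω → ℝ} {D : Fin n → Ω → ℝ}
    (hB : ∀ i, MemLp (B i) 2 μ) (hD : ∀ k, MemLp (D k) 2 μ) {W : Matrix (Fin n) (Fin n) ℝ}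
    (hW : cov μ D D * W * cov μ D D = cov μ D D) :
    cov μ B D * W * cov μ D D = cov μ B D := by
  have h := cov_mul_eq_zero_of_cov_self_mul_eq_zero hB hD (N := W * cov μ D D - 1)
    (by rw [Matrix.mul_sub, ← Matrix.mul_assoc, hW, Matrix.mul_one, sub_self])
  rwa [Matrix.mul_sub, Matrix.mul_one, sub_eq_zero, ← Matrix.mul_assoc] at h

end Degenerate

section Adjustment

variable [MeasurableSpace Ω] {μ : Measure Ω} {m n p : ℕ}

lemma centered_append (X : Fin n → Ω → ℝ) (Y : Fin p → Ω → ℝ) :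
    centered μ (Fin.append X Y) = Fin.append (centered μ X) (centered μ Y) := by
  funext k ω
  refine Fin.addCases (fun k => ?_) (fun k => ?_) k <;> simp [centered]

lemma adjResidual_eq (B : Fin m → Ω → ℝ) (D : Fin n → Ω → ℝ) (W : Matrix (Fin n) (Fin n) ℝ) :
    adjResidual μ B D W = centered μ B - linComb (cov μ B D * W) (centered μ D) := by
  funext i ω
  change B i ω - (_ + linComb (cov μ B D * W) (centered μ D) i ω) = _
  simp only [Pi.sub_apply, centered]
  ring

lemma adjCov_eq_cov_adjResidual (B : Fin m → Ω → ℝ) (C : Fin p → Ω → ℝ) (D : Fin n → Ω → ℝ)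
    (W : Matrix (Fin n) (Fin n) ℝ) :
    adjCov μ B C D W = cov μ (adjResidual μ B D W) (adjResidual μ C D W) :=
  rfl

variable [IsProbabilityMeasure μ]

lemma memLp_adjResidual {B : Fin m → Ω → ℝ} {D : Fin n → Ω → ℝ} (hB : ∀ i, MemLp (B i) 2 μ)
    (hD : ∀ k, MemLp (D k) 2 μ) (W : Matrix (Fin n) (Fin n) ℝ) (i : Fin m) :
    MemLp (adjResidual μ B D W i) 2 μ := by
  rw [adjResidual_eq]
  exact memLp_sub (memLp_centered hB) (memLp_linComb _ (memLp_centered hD)) i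

lemma cov_adjResidual_left {B : Fin m → Ω → ℝ} {D : Fin n → Ω → ℝ}
    (hB : ∀ i, MemLp (B i) 2 μ) (hD : ∀ k, MemLp (D k) 2 μ) {W : Matrix (Fin n) (Fin n) ℝ}
    (hW : cov μ D D * W * cov μ D D = cov μ D D) : cov μ (adjResidual μ B D W) D = 0 := by
  have hc := memLp_centered hD
  rw [adjResidual_eq, cov_sub_left (memLp_centered hB) (memLp_linComb _ hc) hD,
    cov_centered_left hB hD, cov_linComb_left _ hc hD, cov_centered_left hD hD,
    cov_mul_mul_cov_self hB hD hW, sub_self]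

lemma cov_adjResidual_right {F : Fin m → Ω → ℝ} {C : Fin p → Ω → ℝ} {D : Fin n → Ω → ℝ}
    (hF : ∀ i, MemLp (F i) 2 μ) (hC : ∀ j, MemLp (C j) 2 μ) (hD : ∀ k, MemLp (D k) 2 μ)
    (W : Matrix (Fin n) (Fin n) ℝ) (hFD : cov μ F D = 0) :
    cov μ F (adjResidual μ C D W) = cov μ F C := by
  have hc := memLp_centered hD
  rw [adjResidual_eq, cov_sub_right hF (memLp_centered hC) (memLp_linComb _ hc),
    cov_centered_right hF hC, cov_linComb_right _ hF hc, cov_centered_right hF hD, hFD,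
    Matrix.zero_mul, sub_zero]

lemma adjExp_ae_eq_of_mul_cov_self_eq {B : Fin m → Ω → ℝ} {D : Fin n → Ω → ℝ}
    (hB : ∀ i, MemLp (B i) 2 μ) (hD : ∀ k, MemLp (D k) 2 μ) {W : Matrix (Fin n) (Fin n) ℝ}
    (hW : cov μ D D * W * cov μ D D = cov μ D D) {A : Matrix (Fin m) (Fin n) ℝ}
    (hA : A * cov μ D D = cov μ B D) (i : Fin m) :
    ∀ᵐ ω ∂μ, adjExp μ B D W i ω = (∫ ω', B i ω' ∂μ) + linComb A (centered μ D) i ω := by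
  have hE : (cov μ B D * W - A) * cov μ D D = 0 := by
    rw [Matrix.sub_mul, cov_mul_mul_cov_self hB hD hW, hA, sub_self]
  filter_upwards [ae_linComb_centered_eq_zero hD hE i] with ω hω
  rw [sub_linComb, Pi.sub_apply, Pi.sub_apply, sub_eq_zero] at hω
  rw [adjExp, ← hω]
  rfl

lemma cov_sequential_adjResidual_append_eq_zero {B : Fin m → Ω → ℝ} {X : Fin n → Ω → ℝ}
    {Y : Fin p → Ω → ℝ} (hB : ∀ i, MemLp (B i) 2 μ) (hX : ∀ k, MemLp (X k) 2 μ)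
    (hY : ∀ j, MemLp (Y j) 2 μ) {WX : Matrix (Fin n) (Fin n) ℝ} {W' : Matrix (Fin p) (Fin p) ℝ}
    (hWX : cov μ X X * WX * cov μ X X = cov μ X X)
    (hW' : adjCov μ Y Y X WX * W' * adjCov μ Y Y X WX = adjCov μ Y Y X WX) :
    cov μ (adjResidual μ B X WX - linComb (adjCov μ B Y X WX * W') (adjResidual μ Y X WX))
      (Fin.append X Y) = 0 := by
  set F := adjResidual μ B X WX - linComb (adjCov μ B Y X WX * W') (adjResidual μ Y X WX)
  rw [adjCov_eq_cov_adjResidual] at hW'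
  have hrB := memLp_adjResidual hB hX WX
  have hrY := memLp_adjResidual hY hX WX
  have hSrY := memLp_linComb (adjCov μ B Y X WX * W') hrY
  have hFX : cov μ F X = 0 := by
    rw [cov_sub_left hrB hSrY hX, cov_linComb_left _ hrY hX, cov_adjResidual_left hB hX hWX,
      cov_adjResidual_left hY hX hWX, Matrix.mul_zero, sub_zero]
  refine cov_append_right_eq_zero hFX ?_
  rw [← cov_adjResidual_right (memLp_sub hrB hSrY) hY hX WX hFX, cov_sub_left hrB hSrY hrY,
    cov_linComb_left _ hrY hrY, adjCov_eq_cov_adjResidual, cov_mul_mul_cov_self hrB hrY hW',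
    sub_self]

end Adjustment

/-- coherence of sequential adjustment: almost surely, componentwise,
`E_{(X,Y)}(B) = E_X(B) + Cov_X(B,Y)·W'·(Y − E_X(Y))`, where `(X,Y)` is the stacked vector
`Fin.append X Y`, `W` is the Moore–Penrose inverse of `Var((X,Y))`, `W_X` that of `Var(X)`,
and `W'` that of the adjusted variance `Var_X(Y)`. -/
theorem sequential_adjustment_coherent [MeasurableSpace Ω] (μ : Measure Ω)
    [IsProbabilityMeasure μ] {m p q : ℕ}
    (B : Fin m → Ω → ℝ) (X : Fin p → Ω → ℝ) (Y : Fin q → Ω → ℝ)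
    (hB : ∀ i, Measurable (B i) ∧ MemLp (B i) 2 μ)
    (hX : ∀ i, Measurable (X i) ∧ MemLp (X i) 2 μ)
    (hY : ∀ i, Measurable (Y i) ∧ MemLp (Y i) 2 μ)
    (WX : Matrix (Fin p) (Fin p) ℝ) (hWX : IsMoorePenrose (cov μ X X) WX)
    (W : Matrix (Fin (p + q)) (Fin (p + q)) ℝ)
    (hW : IsMoorePenrose (cov μ (Fin.append X Y) (Fin.append X Y)) W)
    (W' : Matrix (Fin q) (Fin q) ℝ) (hW' : IsMoorePenrose (adjCov μ Y Y X WX) W') :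
    ∀ i, ∀ᵐ ω ∂μ,
      adjExp μ B (Fin.append X Y) W i ω =
        adjExp μ B X WX i ω +
          ∑ j, (adjCov μ B Y X WX * W') i j * (Y j ω - adjExp μ Y X WX j ω) := by
  intro i
  have hB2 : ∀ k, MemLp (B k) 2 μ := fun k => (hB k).2
  have hX2 : ∀ k, MemLp (X k) 2 μ := fun k => (hX k).2
  have hY2 : ∀ k, MemLp (Y k) 2 μ := fun k => (hY k).2
  have hZ2 := memLp_append hX2 hY2
  have hnormal := cov_sequential_adjResidual_append_eq_zero hB2 hX2 hY2 hWX.1 hW'.1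
  set P := cov μ B X * WX
  set S := adjCov μ B Y X WX * W'
  set A : Matrix (Fin m) (Fin (p + q)) ℝ :=
    Matrix.of fun i => Fin.append ((P - S * (cov μ Y X * WX)) i) (S i)
  have hAZ : linComb A (centered μ (Fin.append X Y)) =
      linComb P (centered μ X) + linComb S (adjResidual μ Y X WX) := by
    rw [centered_append, linComb_append_sub_mul, adjResidual_eq]
  have hresidual : adjResidual μ B X WX - linComb S (adjResidual μ Y X WX) =
      centered μ B - linComb A (centered μ (Fin.append X Y)) := by
    rw [hAZ, adjResidual_eq B X WX]
    abel
  rw [hresidual, cov_sub_left (memLp_centered hB2) (memLp_linComb _ (memLp_centered hZ2)) hZ2,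
    cov_centered_left hB2 hZ2, cov_linComb_left _ (memLp_centered hZ2) hZ2,
    cov_centered_left hZ2 hZ2, sub_eq_zero] at hnormal
  filter_upwards [adjExp_ae_eq_of_mul_cov_self_eq hB2 hZ2 hW.1 hnormal.symm i] with ω hω
  rw [hω, hAZ, Pi.add_apply, Pi.add_apply, ← add_assoc]
  rfl
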